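/- arXiv:2306.12395 — 2 statements merged into one kernel-verified Lean document; each statement's English description precedes it below -/
import Mathlib

section
/- For every k ≥ 2, the function h_k(z) = (1/(1 − z)) · log((1 + z + ⋯ + z^{k−1})/k) extends to an analytic function on the unit disk and belongs to the Hardy space H². -/
open Filter Topology
open scoped ComplexInnerProductSpace

/-- The Hardy space `H²(𝔻)`, modeled as the space of square-summable Taylor
coefficient sequences. -/
noncomputable abbrev H2 : Type := lp (fun _ : ℕ => ℂ) 2

/-- Evaluation of an element of `H²` at a point of the unit disk, via its power series. -/
noncomputable def eval (f : H2) (z : ℂ) : ℂ := ∑' n : ℕ, (f n) * z ^ n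

/-!
Since `(1 - z) h_k(z) = log (1 - z ^ k) - log (1 - z) - log k`, the Taylor coefficients of
`(1 - z) h_k` are `1 / n - [k ∣ n] k / n` for `n ≥ 1`, so those of `h_k` are their partial sums
`H n - H ⌊n / k⌋ - log k`, with `H` the harmonic numbers. Comparing `H n` with `log n` from both
sides (the two Euler–Mascheroni sequences) shows that this is `O(1 / ⌊n / k⌋) = O(k / n)`, which is
square-summable.
-/

section PowerSeries

variable {𝕜 : Type*} [NontriviallyNormedField 𝕜] [CompleteSpace 𝕜]

theorem summable_mul_pow_of_norm_le {c : ℕ → 𝕜} {C : ℝ} (hc : ∀ n, ‖c n‖ ≤ C) {z : 𝕜}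
    (hz : ‖z‖ < 1) : Summable fun n => c n * z ^ n := by
  refine .of_norm_bounded ((summable_geometric_of_lt_one (norm_nonneg z) hz).mul_left C) ?_
  intro n
  rw [norm_mul, norm_pow]
  exact mul_le_mul_of_nonneg_right (hc n) (by positivity)

theorem differentiableOn_tsum_mul_pow_of_norm_le {c : ℕ → 𝕜} {C : ℝ}
    (hc : ∀ n, ‖c n‖ ≤ C) :
    DifferentiableOn 𝕜 (fun z => ∑' n, c n * z ^ n) (Metric.ball 0 1) := by
  set p := FormalMultilinearSeries.ofScalars 𝕜 c
  have hradius : 1 ≤ p.radius := by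
    simpa using p.le_radius_of_bound C (r := 1) fun n => by
      simpa [p, FormalMultilinearSeries.ofScalars_norm] using hc n
  have hsum : p.sum = fun z => ∑' n, c n * z ^ n := by
    ext z
    simp [p, FormalMultilinearSeries.sum, mul_comm]
  rw [← hsum, ← Metric.eball_ofReal, ENNReal.ofReal_one]
  exact (p.hasFPowerSeriesOnBall (zero_lt_one.trans_le hradius)).differentiableOn.mono
    (Metric.eball_subset_eball hradius)

end PowerSeries

namespace H2

theorem hasSum_eval (f : H2) {z : ℂ} (hz : ‖z‖ < 1) :
    HasSum (fun n => f n * z ^ n) (eval f z) :=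
  (summable_mul_pow_of_norm_le (lp.norm_apply_le_norm two_ne_zero f) hz).hasSum

theorem differentiableOn_eval (f : H2) : DifferentiableOn ℂ (eval f) (Metric.ball 0 1) :=
  differentiableOn_tsum_mul_pow_of_norm_le (lp.norm_apply_le_norm two_ne_zero f)

theorem eval_zero (f : H2) : eval f 0 = f 0 := by
  rw [eval, tsum_eq_single 0 fun n hn => by simp [hn]]
  simp

end H2

theorem HasSum.one_sub_mul_of_mul_pow {R : Type*} [CommRing R] [TopologicalSpace R]
    [IsTopologicalRing R] {c : ℕ → R} {z S : R} (hS : HasSum (fun n => c n * z ^ n) S) :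
    HasSum (fun n => (c (n + 1) - c n) * z ^ (n + 1)) ((1 - z) * S - c 0) := by
  have hshift : HasSum (fun n => c (n + 1) * z ^ (n + 1)) (S - c 0) := by
    simpa using (hasSum_nat_add_iff' 1).mpr hS
  rw [show (1 - z) * S - c 0 = S - c 0 - z * S by ring]
  exact (hshift.sub (hS.mul_left z)).congr_fun fun n => by ring

theorem HasSum.ite_dvd {M : Type*} [AddCommMonoid M] [TopologicalSpace M] {f : ℕ → M} {a : M}
    {k : ℕ} (hk : 0 < k) (hf : HasSum f a) :
    HasSum (fun n => if k ∣ n then f (n / k) else 0) a := by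
  rw [← (mul_right_injective₀ hk.ne').hasSum_iff]
  · simpa [Function.comp_def, hk.ne'] using hf
  · intro n hn
    rw [if_neg]
    rintro ⟨m, rfl⟩
    exact hn ⟨m, rfl⟩

namespace Complex

theorem hasSum_ite_dvd_neg_log_one_sub_pow {k : ℕ} (hk : 0 < k) {z : ℂ} (hz : ‖z‖ < 1) :
    HasSum (fun n : ℕ => if k ∣ n then k * z ^ n / n else 0) (-log (1 - z ^ k)) := by
  have hzk : ‖z ^ k‖ < 1 := by
    rw [norm_pow]
    exact pow_lt_one₀ (norm_nonneg z) hz hk.ne'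
  convert (hasSum_taylorSeries_neg_log hzk).ite_dvd hk using 2 with n
  split_ifs with hdvd
  · have hk0 : (k : ℂ) ≠ 0 := Nat.cast_ne_zero.mpr hk.ne'
    rw [← pow_mul, Nat.mul_div_cancel' hdvd, Nat.cast_div hdvd hk0]
    field_simp
  · rfl

theorem exp_log_one_sub_pow_sub_log_one_sub {k : ℕ} (hk : 0 < k) {z : ℂ} (hz : ‖z‖ < 1) :
    exp (log (1 - z ^ k) - log (1 - z) - Real.log k) = (∑ j ∈ Finset.range k, z ^ j) / k := by
  have hz1 : z ≠ 1 := by rintro rfl; simp at hz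
  have hzk : z ^ k ≠ 1 := by
    intro h
    have := congrArg norm h
    rw [norm_pow, norm_one] at this
    exact (pow_lt_one₀ (norm_nonneg z) hz hk.ne').ne this
  rw [exp_sub, exp_sub, exp_log (sub_ne_zero.mpr hzk.symm), exp_log (sub_ne_zero.mpr hz1.symm),
    ← ofReal_exp, Real.exp_log (by exact_mod_cast hk), ofReal_natCast, geom_sum_eq hz1]
  have : z - 1 ≠ 0 := sub_ne_zero.mpr hz1
  field_simp
  ring

end Complex

/-- The Taylor coefficients of `h_k`. -/
noncomputable def hkCoeff (k n : ℕ) : ℝ := harmonic n - harmonic (n / k) - Real.log k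

theorem hkCoeff_zero (k : ℕ) : hkCoeff k 0 = -Real.log k := by
  simp [hkCoeff]

theorem hkCoeff_succ_sub (k n : ℕ) :
    hkCoeff k (n + 1) - hkCoeff k n =
      1 / ((n : ℝ) + 1) - if k ∣ n + 1 then (k : ℝ) / (n + 1) else 0 := by
  simp only [hkCoeff, Nat.succ_div, harmonic_succ]
  split_ifs with hdvd
  · have hk : (k : ℝ) ≠ 0 := Nat.cast_ne_zero.mpr (ne_zero_of_dvd_ne_zero n.succ_ne_zero hdvd)
    have hquot : ((n / k + 1 : ℕ) : ℝ) = (n + 1) / k := by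
      rw [← Nat.succ_div_of_dvd hdvd, Nat.cast_div hdvd hk]
      push_cast
      ring
    rw [harmonic_succ]
    push_cast at hquot ⊢
    rw [hquot]
    field_simp
    ring
  · simp

section Bounds

variable {k n : ℕ}

theorem hkCoeff_le (hk : 0 < k) (hn : k ≤ n) : hkCoeff k n ≤ ((n / k : ℕ) : ℝ)⁻¹ := by
  set q := n / k
  have hq : 0 < q := Nat.div_pos hn hk
  have hmono : Real.eulerMascheroniSeq' n ≤ Real.eulerMascheroniSeq' q :=
    Real.strictAnti_eulerMascheroniSeq'.antitone (Nat.div_le_self n k)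
  simp only [Real.eulerMascheroniSeq', hq.ne', (hk.trans_le hn).ne', if_false] at hmono
  have hk' : (0 : ℝ) < k := by exact_mod_cast hk
  have hq' : (0 : ℝ) < q := by exact_mod_cast hq
  have hn' : (0 : ℝ) < n := by exact_mod_cast hk.trans_le hn
  have hlt : (n : ℝ) < k * (q + 1) := by exact_mod_cast Nat.lt_mul_div_succ n hk
  have hlog : Real.log n - Real.log q - Real.log k ≤ n / (k * q) - 1 := by
    rw [sub_sub, ← Real.log_mul hq'.ne' hk'.ne', ← Real.log_div hn'.ne' (by positivity),
      mul_comm]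
    exact Real.log_le_sub_one_of_pos (by positivity)
  have hfrac : (n : ℝ) / (k * q) - 1 ≤ (q : ℝ)⁻¹ := by
    rw [div_sub_one (by positivity), div_le_iff₀ (by positivity)]
    field_simp
    linarith
  unfold hkCoeff
  linarith

theorem neg_inv_le_hkCoeff (hk : 0 < k) (hn : k ≤ n) : -((n / k : ℕ) : ℝ)⁻¹ ≤ hkCoeff k n := by
  set q := n / k
  have hq : 0 < q := Nat.div_pos hn hk
  have hmono : Real.eulerMascheroniSeq q ≤ Real.eulerMascheroniSeq n :=
    Real.strictMono_eulerMascheroniSeq.monotone (Nat.div_le_self n k)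
  simp only [Real.eulerMascheroniSeq] at hmono
  have hk' : (0 : ℝ) < k := by exact_mod_cast hk
  have hq' : (0 : ℝ) < q := by exact_mod_cast hq
  have hle : (k : ℝ) * q ≤ n := by exact_mod_cast Nat.mul_div_le n k
  have hlog : 1 - k * (q + 1) / (n + 1) ≤ Real.log (n + 1) - Real.log (q + 1) - Real.log k := by
    rw [sub_sub, ← Real.log_mul (by positivity) hk'.ne', ← Real.log_div (by positivity)
      (by positivity), mul_comm _ (k : ℝ)]
    simpa using Real.one_sub_inv_le_log_of_pos (x := (n + 1) / (k * (q + 1))) (by positivity)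
  have hfrac : -(q : ℝ)⁻¹ ≤ 1 - k * (q + 1) / (n + 1) := by
    rw [neg_le_sub_iff_le_add, div_le_iff₀ (by positivity)]
    field_simp
    nlinarith
  unfold hkCoeff
  linarith

theorem abs_hkCoeff_le (hk : 0 < k) (hn : k ≤ n) : |hkCoeff k n| ≤ 2 * k / n := by
  have hq : 0 < n / k := Nat.div_pos hn hk
  have hn' : (0 : ℝ) < n := by exact_mod_cast hk.trans_le hn
  have hlt : (n : ℝ) ≤ 2 * k * (n / k : ℕ) := by
    have : n < k * (n / k + 1) := Nat.lt_mul_div_succ n hk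
    exact_mod_cast (by nlinarith : n ≤ 2 * k * (n / k))
  have hinv : ((n / k : ℕ) : ℝ)⁻¹ ≤ 2 * k / n := by
    rw [inv_le_comm₀ (by positivity) (by positivity), inv_div, div_le_iff₀ (by positivity)]
    linarith
  exact abs_le.mpr ⟨(neg_le_neg hinv).trans (neg_inv_le_hkCoeff hk hn),
    (hkCoeff_le hk hn).trans hinv⟩

end Bounds

theorem memℓp_hkCoeff {k : ℕ} (hk : 0 < k) : Memℓp (fun n => (hkCoeff k n : ℂ)) 2 := by
  rw [memℓp_gen_iff (by norm_num)]
  refine .of_norm_bounded_eventually_nat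
    ((Real.summable_nat_pow_inv.mpr one_lt_two).mul_left ((2 * k : ℝ) ^ 2)) ?_
  filter_upwards [eventually_ge_atTop k] with n hn
  rw [ENNReal.toReal_ofNat, Real.rpow_two, norm_pow, norm_norm, Complex.norm_real,
    Real.norm_eq_abs, sq_abs]
  calc hkCoeff k n ^ 2 ≤ (2 * k / n) ^ 2 := by
        simpa using pow_le_pow_left₀ (abs_nonneg _) (abs_hkCoeff_le hk hn) 2
    _ = (2 * k) ^ 2 * ((n : ℝ) ^ 2)⁻¹ := by ring

theorem one_sub_mul_eq_log_of_hasSum_hkCoeff {k : ℕ} (hk : 0 < k) {z S : ℂ} (hz : ‖z‖ < 1)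
    (hS : HasSum (fun n => (hkCoeff k n : ℂ) * z ^ n) S) :
    (1 - z) * S = Complex.log (1 - z ^ k) - Complex.log (1 - z) - Real.log k := by
  have hdvd := (hasSum_nat_add_iff' 1).mpr (Complex.hasSum_ite_dvd_neg_log_one_sub_pow hk hz)
  simp only [Finset.range_one, Finset.sum_singleton, dvd_zero, if_true, Nat.cast_zero,
    div_zero, sub_zero] at hdvd
  have hsum : HasSum (fun n => ((hkCoeff k (n + 1) : ℂ) - hkCoeff k n) * z ^ (n + 1))
      (-Complex.log (1 - z) - -Complex.log (1 - z ^ k)) := by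
    refine ((Complex.hasSum_taylorSeries_neg_log' hz).sub hdvd).congr_fun fun n => ?_
    rw [← Complex.ofReal_sub, hkCoeff_succ_sub]
    split_ifs <;> push_cast <;> ring
  have := hS.one_sub_mul_of_mul_pow.unique hsum
  rw [hkCoeff_zero, Complex.ofReal_neg] at this
  linear_combination this

/-- for `k ≥ 2`, `h_k(z) = (1/(1-z)) log((1+z+⋯+z^(k-1))/k)` (principal
branch, pinned by its value `-log k` at `0`) extends analytically to the unit disk and
belongs to `H²`. -/
theorem hk_mem_H2 (k : ℕ) (hk : 2 ≤ k) :
    ∃ h : H2,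
      DifferentiableOn ℂ (eval h) (Metric.ball (0 : ℂ) 1) ∧
      eval h 0 = -Real.log k ∧
      (∀ z : ℂ, ‖z‖ < 1 →
        Complex.exp ((1 - z) * eval h z) = (∑ j ∈ Finset.range k, z ^ j) / k) := by
  have hk0 : 0 < k := by omega
  let h : H2 := ⟨fun n => hkCoeff k n, memℓp_hkCoeff hk0⟩
  refine ⟨h, H2.differentiableOn_eval h, ?_, fun z hz => ?_⟩
  · simp [H2.eval_zero, h, hkCoeff_zero]
  · rw [one_sub_mul_eq_log_of_hasSum_hkCoeff hk0 hz (H2.hasSum_eval h hz),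
      Complex.exp_log_one_sub_pow_sub_log_one_sub hk0 hz]
end

section
/- Let M = span{h_k − h_ℓ : k, ℓ ≥ 2} ⊂ H², where h_k(z) = (1/(1−z)) log((1 + z + ⋯ + z^{k−1})/k). Then the closure of M is invariant under every W_n, n ≥ 1: W_n(M̄) ⊆ M̄. -/
/-!
Since `exp ((1 - z) h_k(z)) = (1 + z + ⋯ + z^{k-1}) / k`, the functional equation
`(1 - z)(1 + ⋯ + z^{n-1}) = 1 - z^n` gives `exp ((1 - z) (W_n h_k)(z)) = exp ((1 - z^n) h_k(z^n))`,
and `(1 + ⋯ + z^{n-1})(1 + z^n + ⋯ + z^{n(k-1)}) = 1 + ⋯ + z^{nk-1}` shows that this equals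
`exp ((1 - z) (h_{nk} - h_n)(z))`. Two continuous logarithms of the same function on the disk
that agree at `0` coincide, so `W_n h_k = h_{nk} - h_n`. Hence `W_n` maps the generators of `M`
into `M`, and by continuity it maps `M̄` into `M̄`.
-/

open Filter Topology
open scoped ComplexInnerProductSpace

theorem geom_sum_pow_mul_geom_sum {R : Type*} [CommSemiring R] (x : R) (n k : ℕ) :
    (∑ i ∈ Finset.range k, (x ^ n) ^ i) * ∑ j ∈ Finset.range n, x ^ j =
      ∑ j ∈ Finset.range (n * k), x ^ j := by
  induction k with
  | zero => simp
  | succ k ih =>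
    rw [Finset.sum_range_succ, add_mul, ih, Nat.mul_succ, Finset.sum_range_add, Finset.mul_sum]
    simp only [← pow_mul, ← pow_add, mul_comm n k]

theorem IsPreconnected.eqOn_zero_of_cexp_eq_one {X : Type*} [TopologicalSpace X] {s : Set X}
    {F : X → ℂ} {a : X} (hs : IsPreconnected s) (hF : ContinuousOn F s)
    (hexp : ∀ x ∈ s, Complex.exp (F x) = 1) (ha : a ∈ s) (hFa : F a = 0) :
    ∀ x ∈ s, F x = 0 := by
  have hmaps : Set.MapsTo F s (AddSubgroup.zmultiples (2 * Real.pi * Complex.I) : Set ℂ) :=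
    fun x hx => by
      obtain ⟨m, hm⟩ := Complex.exp_eq_one_iff.1 (hexp x hx)
      exact ⟨m, by simp only [hm, zsmul_eq_mul]⟩
  have : DiscreteTopology (AddSubgroup.zmultiples (2 * Real.pi * Complex.I) : Set ℂ) :=
    NormedSpace.discreteTopology_zmultiples _
  intro x hx
  rw [← hFa]
  exact hs.constant_of_mapsTo (isDiscrete_iff_discreteTopology.mpr this) hF hmaps hx ha

theorem Metric.eball_one {α : Type*} [PseudoMetricSpace α] (x : α) :
    Metric.eball x 1 = Metric.ball x 1 := by
  rw [← ENNReal.coe_one, Metric.eball_coe, NNReal.coe_one]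

namespace H2

theorem summable_mul_pow (f : H2) {z : ℂ} (hz : ‖z‖ < 1) :
    Summable (fun n : ℕ => f n * z ^ n) := by
  refine Summable.of_norm_bounded
    ((summable_geometric_of_lt_one (norm_nonneg z) hz).mul_left ‖f‖) fun n => ?_
  rw [norm_mul, norm_pow]
  gcongr
  exact lp.norm_apply_le_norm (by norm_num) f n

theorem hasFPowerSeriesOnBall_eval (f : H2) :
    HasFPowerSeriesOnBall (eval f) (FormalMultilinearSeries.ofScalars ℂ (fun n => f n)) 0 1 where
  r_le := by
    refine ENNReal.le_of_forall_nnreal_lt fun r hr =>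
      FormalMultilinearSeries.le_radius_of_bound _ ‖f‖ fun n => ?_
    rw [FormalMultilinearSeries.ofScalars_norm]
    have hr1 : (r : ℝ) ≤ 1 := by exact_mod_cast hr.le
    calc ‖f n‖ * (r : ℝ) ^ n ≤ ‖f‖ * 1 := by
          gcongr
          · exact lp.norm_apply_le_norm (by norm_num) f n
          · exact pow_le_one₀ r.coe_nonneg hr1
      _ = ‖f‖ := mul_one _
  r_pos := by norm_num
  hasSum {y} hy := by
    rw [Metric.eball_one, Metric.mem_ball, dist_zero_right] at hy
    simp only [FormalMultilinearSeries.ofScalars_apply_eq, smul_eq_mul, zero_add]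
    exact (summable_mul_pow f hy).hasSum

theorem continuousOn_eval (f : H2) : ContinuousOn (eval f) (Metric.ball 0 1) := by
  simpa only [Metric.eball_one] using (hasFPowerSeriesOnBall_eval f).continuousOn

theorem eval_sub (f g : H2) {z : ℂ} (hz : ‖z‖ < 1) :
    eval (f - g) z = eval f z - eval g z := by
  simp only [eval, ← (summable_mul_pow f hz).tsum_sub (summable_mul_pow g hz), lp.coeFn_sub,
    Pi.sub_apply, sub_mul]

theorem ext_of_eval {f g : H2} (h : ∀ z : ℂ, ‖z‖ < 1 → eval f z = eval g z) : f = g := by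
  have hg : HasFPowerSeriesOnBall (eval f)
      (FormalMultilinearSeries.ofScalars ℂ (fun n => g n)) 0 1 :=
    (hasFPowerSeriesOnBall_eval g).congr fun y hy => by
      rw [Metric.eball_one, Metric.mem_ball, dist_zero_right] at hy
      exact (h y hy).symm
  have := (hasFPowerSeriesOnBall_eval f).hasFPowerSeriesAt.eq_formalMultilinearSeries
    hg.hasFPowerSeriesAt
  rw [FormalMultilinearSeries.ofScalars_series_eq_iff] at this
  exact lp.ext this

theorem eq_of_cexp_eval_eq {f g : H2} (h0 : eval f 0 = eval g 0)
    (hexp : ∀ z : ℂ, ‖z‖ < 1 →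
      Complex.exp ((1 - z) * eval f z) = Complex.exp ((1 - z) * eval g z)) :
    f = g := by
  set F : ℂ → ℂ := fun z => (1 - z) * (eval f z - eval g z)
  have hF : ∀ z ∈ Metric.ball (0 : ℂ) 1, F z = 0 := by
    refine (convex_ball (0 : ℂ) 1).isPreconnected.eqOn_zero_of_cexp_eq_one
      ((continuousOn_const.sub continuousOn_id).mul
        ((continuousOn_eval f).sub (continuousOn_eval g)))
      (fun z hz => ?_) (Metric.mem_ball_self one_pos) (by simp [F, h0])
    rw [mem_ball_zero_iff] at hz
    simp only [F, mul_sub, Complex.exp_sub, hexp z hz, div_self (Complex.exp_ne_zero _)]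
  refine ext_of_eval fun z hz => ?_
  have hz1 : 1 - z ≠ 0 := sub_ne_zero.2 fun h1 => by simp [← h1] at hz
  exact sub_eq_zero.mp ((mul_eq_zero.mp (hF z (mem_ball_zero_iff.mpr hz))).resolve_left hz1)

end H2

theorem W_apply_h (h : ℕ → H2)
    (hh : ∀ k : ℕ, 1 ≤ k → eval (h k) 0 = -Real.log k ∧
      ∀ z : ℂ, ‖z‖ < 1 →
        Complex.exp ((1 - z) * eval (h k) z) = (∑ j ∈ Finset.range k, z ^ j) / k)
    (W : ℕ → H2 →L[ℂ] H2)
    (hW : ∀ n : ℕ, 1 ≤ n → ∀ f : H2, ∀ z : ℂ, ‖z‖ < 1 →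
      eval (W n f) z = (∑ j ∈ Finset.range n, z ^ j) * eval f (z ^ n))
    {n k : ℕ} (hn : 1 ≤ n) (hk : 1 ≤ k) :
    W n (h k) = h (n * k) - h n := by
  have hnk : 1 ≤ n * k := Nat.one_le_iff_ne_zero.2 (by positivity)
  refine H2.eq_of_cexp_eval_eq ?_ fun z hz => ?_
  · have hW0 := hW n hn (h k) 0 (by simp)
    rw [zero_geom_sum, if_neg (by omega), zero_pow (by omega), one_mul] at hW0
    rw [hW0, H2.eval_sub _ _ (by simp), (hh k hk).1, (hh _ hnk).1, (hh n hn).1, Nat.cast_mul,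
      Real.log_mul (by positivity) (by positivity)]
    push_cast
    ring
  · have hzn : ‖z ^ n‖ < 1 := by
      rw [norm_pow]
      exact pow_lt_one₀ (norm_nonneg z) hz (by omega)
    rw [H2.eval_sub _ _ hz, hW n hn _ z hz, ← mul_assoc, mul_neg_geom_sum, (hh k hk).2 _ hzn,
      mul_sub, Complex.exp_sub, eq_div_iff (Complex.exp_ne_zero _), (hh _ hnk).2 z hz,
      (hh n hn).2 z hz, ← geom_sum_pow_mul_geom_sum, Nat.cast_mul]
    ring

/-- the closure of `M = span{h_k - h_ℓ : k, ℓ ≥ 2}` is invariant under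
every `W_n`, `n ≥ 1`. -/
theorem closure_M_invariant (h : ℕ → H2)
    (hh : ∀ k : ℕ, 1 ≤ k → eval (h k) 0 = -Real.log k ∧
      ∀ z : ℂ, ‖z‖ < 1 →
        Complex.exp ((1 - z) * eval (h k) z) = (∑ j ∈ Finset.range k, z ^ j) / k)
    (W : ℕ → H2 →L[ℂ] H2)
    (hW : ∀ n : ℕ, 1 ≤ n → ∀ f : H2, ∀ z : ℂ, ‖z‖ < 1 →
      eval (W n f) z = (∑ j ∈ Finset.range n, z ^ j) * eval f (z ^ n))
    (n : ℕ) (hn : 1 ≤ n) (f : H2)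
    (hf : f ∈ closure ((Submodule.span ℂ
        {x : H2 | ∃ k l : ℕ, 2 ≤ k ∧ 2 ≤ l ∧ x = h k - h l} : Submodule ℂ H2) : Set H2)) :
    W n f ∈ closure ((Submodule.span ℂ
        {x : H2 | ∃ k l : ℕ, 2 ≤ k ∧ 2 ≤ l ∧ x = h k - h l} : Submodule ℂ H2) : Set H2) := by
  refine map_mem_closure (W n).continuous hf fun x hx => ?_
  refine (Submodule.map_span_le (W n : H2 →ₗ[ℂ] H2) _ _).mpr ?_ ⟨x, hx, rfl⟩
  rintro _ ⟨k, l, hk, hl, rfl⟩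
  refine Submodule.subset_span ⟨n * k, n * l, hk.trans (Nat.le_mul_of_pos_left k hn),
    hl.trans (Nat.le_mul_of_pos_left l hn), ?_⟩
  simp only [ContinuousLinearMap.coe_coe, map_sub, W_apply_h h hh W hW hn (by omega : 1 ≤ k),
    W_apply_h h hh W hW hn (by omega : 1 ≤ l)]
  abel
end
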